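/- Energy conservation for the Kirchhoff plate with simply supported boundary: if (α_w, A_κ) is a smooth solution of ∂_t α_w = −div(Div(E_κ)), ∂_t A_κ = Hess(e_w) with e_w = α_w/(ρb), E_κ = 𝒟A_κ, zero forcing, and boundary conditions e_w|∂Ω = 0 and nᵀE_κn|∂Ω = 0, and additionally ∂_s e_w = 0 on ∂Ω (which follows from e_w|∂Ω=0), then H(t) = ½∫_Ω [α_w²/(ρb) + E_κ : A_κ] dΩ is constant in time. -/

import Mathlib

open MeasureTheory Bornology Real Matrix

attribute [local instance] Matrix.normedAddCommGroup Matrix.normedSpace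

noncomputable section

abbrev V2 := Fin 2 → ℝ
abbrev M2 := Matrix (Fin 2) (Fin 2) ℝ

/-- partial derivative in direction `i` -/
def pd (i : Fin 2) (f : V2 → ℝ) (x : V2) : ℝ := fderiv ℝ f x (Pi.single i 1)

/-- gradient of a scalar field -/
def grad (f : V2 → ℝ) (x : V2) : V2 := fun i => pd i f x

/-- Jacobian matrix of a vector field -/
def jac (u : V2 → V2) (x : V2) : M2 := fun i j => pd j (fun y => u y i) x

/-- skew-symmetric part of a matrix -/
def skw (A : M2) : M2 := (2⁻¹ : ℝ) • (A - Aᵀ)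

/-- symmetric part of a matrix -/
def symP (A : M2) : M2 := (2⁻¹ : ℝ) • (A + Aᵀ)

/-- symmetric gradient -/
def sgrad (u : V2 → V2) (x : V2) : M2 := symP (jac u x)

/-- divergence of a vector field -/
def divv (u : V2 → V2) (x : V2) : ℝ := ∑ i, pd i (fun y => u y i) x

/-- row-wise (column-wise) divergence of a matrix field -/
def DivM (M : V2 → M2) (x : V2) : V2 := fun j => ∑ i, pd i (fun y => M y i j) x

/-- Hessian matrix -/
def hess (f : V2 → ℝ) (x : V2) : M2 := fun i j => pd i (fun y => pd j f y) x

/-- double divergence of a matrix field -/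
def divDiv (M : V2 → M2) (x : V2) : ℝ := ∑ i, ∑ j, pd i (fun y => pd j (fun z => M z i j) y) x

/-- Frobenius contraction -/
def frob (A B : M2) : ℝ := ∑ i, ∑ j, A i j * B i j


/-! ### Auxiliary machinery for the energy conservation proof -/

section Helpers

lemma contDiff_pd {f : V2 → ℝ} (hf : ContDiff ℝ (⊤ : ℕ∞) f) (i : Fin 2) :
    ContDiff ℝ (⊤ : ℕ∞) (pd i f) :=
  (hf.fderiv_right (by simp)).clm_apply contDiff_const

/-- joint spatial partial derivative -/
def pdx (i : Fin 2) (f : ℝ × V2 → ℝ) (p : ℝ × V2) : ℝ :=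
  fderiv ℝ f p (0, Pi.single i 1)

lemma contDiff_pdx {f : ℝ × V2 → ℝ} (hf : ContDiff ℝ (⊤ : ℕ∞) f) (i : Fin 2) :
    ContDiff ℝ (⊤ : ℕ∞) (pdx i f) :=
  (hf.fderiv_right (by simp)).clm_apply contDiff_const

lemma contDiff_slice {f : ℝ × V2 → ℝ} (hf : ContDiff ℝ (⊤ : ℕ∞) f) (t : ℝ) :
    ContDiff ℝ (⊤ : ℕ∞) (fun x => f (t, x)) :=
  hf.comp (contDiff_const.prodMk contDiff_id)

lemma pd_slice {f : ℝ × V2 → ℝ} (hf : ContDiff ℝ (⊤ : ℕ∞) f) (i : Fin 2) (t : ℝ) (x : V2) :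
    pd i (fun y => f (t, y)) x = pdx i f (t, x) := by
  have h1 : HasFDerivAt (fun y : V2 => (t, y)) (ContinuousLinearMap.inr ℝ ℝ V2) x :=
    hasFDerivAt_prodMk_right t x
  have h2 : HasFDerivAt f (fderiv ℝ f (t, x)) (t, x) :=
    (hf.differentiable (by simp) (t, x)).hasFDerivAt
  have h3 : HasFDerivAt (fun y : V2 => f (t, y))
      ((fderiv ℝ f (t, x)).comp (ContinuousLinearMap.inr ℝ ℝ V2)) x := h2.comp x h1
  rw [pd, h3.fderiv]
  rfl

lemma pd_mul {f g : V2 → ℝ} {x : V2} (hf : DifferentiableAt ℝ f x)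
    (hg : DifferentiableAt ℝ g x) (i : Fin 2) :
    pd i (fun y => f y * g y) x = pd i f x * g x + f x * pd i g x := by
  simp only [pd, fderiv_fun_mul hf hg]
  simp [mul_comm]
  ring

lemma pd_sum {ι : Type*} (s : Finset ι) (f : ι → V2 → ℝ) {x : V2}
    (hf : ∀ j ∈ s, DifferentiableAt ℝ (f j) x) (i : Fin 2) :
    pd i (fun y => ∑ j ∈ s, f j y) x = ∑ j ∈ s, pd i (f j) x := by
  simp only [pd]
  rw [fderiv_fun_sum hf]
  simp

lemma pd_sub {f g : V2 → ℝ} {x : V2} (hf : DifferentiableAt ℝ f x)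
    (hg : DifferentiableAt ℝ g x) (i : Fin 2) :
    pd i (fun y => f y - g y) x = pd i f x - pd i g x := by
  simp only [pd, fderiv_fun_sub hf hg]; simp

lemma hasDerivAt_slice_t {f : ℝ × V2 → ℝ} (hf : ContDiff ℝ (⊤ : ℕ∞) f) (t : ℝ) (x : V2) :
    HasDerivAt (fun s => f (s, x)) (deriv (fun s => f (s, x)) t) t := by
  have : DifferentiableAt ℝ (fun s : ℝ => f (s, x)) t :=
    (hf.differentiable (by simp)).comp (differentiable_id.prodMk (differentiable_const x)) t
  exact this.hasDerivAt

lemma contDiff_entry {E : Type*} [NormedAddCommGroup E] [NormedSpace ℝ E] {g : E → M2}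
    (hg : ContDiff ℝ (⊤ : ℕ∞) g) (i j : Fin 2) : ContDiff ℝ (⊤ : ℕ∞) (fun x => g x i j) :=
  contDiff_pi.mp (contDiff_pi.mp hg i) j

lemma frob_comm (A B : M2) : frob A B = frob B A := by
  simp [frob, mul_comm]

lemma hess_slice {f : ℝ × V2 → ℝ} (hf : ContDiff ℝ (⊤ : ℕ∞) f) (t : ℝ) (x : V2) (i j : Fin 2) :
    hess (fun y => f (t, y)) x i j = pdx i (pdx j f) (t, x) := by
  show pd i (fun y => pd j (fun z => f (t, z)) y) x = _
  have h1 : (fun y => pd j (fun z => f (t, z)) y) = fun y => pdx j f (t, y) :=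
    funext fun y => pd_slice hf j t y
  rw [h1]
  exact pd_slice (contDiff_pdx hf j) i t x

lemma divDiv_slice {g : ℝ × V2 → M2} (hg : ∀ i j, ContDiff ℝ (⊤ : ℕ∞) (fun p => g p i j))
    (t : ℝ) (x : V2) :
    divDiv (fun y => g (t, y)) x = ∑ i, ∑ j, pdx i (pdx j (fun p => g p i j)) (t, x) := by
  show (∑ i, ∑ j, pd i (fun y => pd j (fun z => g (t, z) i j) y) x) = _
  refine Finset.sum_congr rfl fun i _ => Finset.sum_congr rfl fun j _ => ?_
  have h1 : (fun y => pd j (fun z => g (t, z) i j) y) = fun y => pdx j (fun p => g p i j) (t, y) :=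
    funext fun y => pd_slice (hg i j) j t y
  rw [h1]
  exact pd_slice (contDiff_pdx (hg i j) j) i t x

/-- the auxiliary vector field whose divergence produces the energy identity -/
def Fvec (𝒟 : M2 →ₗ[ℝ] M2) (w : V2 → ℝ) (K : V2 → M2) (y : V2) : V2 :=
  fun i => (∑ j, 𝒟 (K y) j i * pd j w y) - w y * ∑ j, pd j (fun z => 𝒟 (K z) j i) y

lemma Fvec_contDiff (𝒟 : M2 →ₗ[ℝ] M2) {w : V2 → ℝ} {K : V2 → M2}
    (hw : ContDiff ℝ (⊤ : ℕ∞) w) (hDK : ContDiff ℝ (⊤ : ℕ∞) (fun y => 𝒟 (K y))) :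
    ContDiff ℝ (⊤ : ℕ∞) (Fvec 𝒟 w K) := by
  have hE : ∀ i j, ContDiff ℝ (⊤ : ℕ∞) (fun y => 𝒟 (K y) i j) := fun i j => contDiff_entry hDK i j
  rw [contDiff_pi]
  intro i
  simp only [Fvec]
  exact (ContDiff.sum fun j _ => (hE j i).mul (contDiff_pd hw j)).sub
    (hw.mul (ContDiff.sum fun j _ => contDiff_pd (hE j i) j))

lemma Fvec_bdry (𝒟 : M2 →ₗ[ℝ] M2) (w : V2 → ℝ) (K : V2 → M2) (nv : V2) (x : V2)
    (hunit : nv ⬝ᵥ nv = 1) (hw0 : w x = 0)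
    (hs : grad w x ⬝ᵥ ![-(nv 1), nv 0] = 0)
    (hnn : nv ⬝ᵥ (𝒟 (K x)).mulVec nv = 0) :
    Fvec 𝒟 w K x ⬝ᵥ nv = 0 := by
  simp only [Fvec, dotProduct, grad, Matrix.mulVec, Fin.sum_univ_two, hw0, zero_mul,
    sub_zero, Matrix.cons_val_zero, Matrix.cons_val_one, Matrix.head_cons] at *
  linear_combination
    (-((𝒟 (K x) 0 0 * nv 0 + 𝒟 (K x) 0 1 * nv 1) * pd 0 w x +
        (𝒟 (K x) 1 0 * nv 0 + 𝒟 (K x) 1 1 * nv 1) * pd 1 w x)) * hunit +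
    (-((𝒟 (K x) 0 0 * nv 0 + 𝒟 (K x) 0 1 * nv 1) * nv 1) +
        (𝒟 (K x) 1 0 * nv 0 + 𝒟 (K x) 1 1 * nv 1) * nv 0) * hs +
    (pd 0 w x * nv 0 + pd 1 w x * nv 1) * hnn

lemma Fvec_div (𝒟 : M2 →ₗ[ℝ] M2) {w : V2 → ℝ} {K : V2 → M2}
    (hw : ContDiff ℝ (⊤ : ℕ∞) w) (hDK : ContDiff ℝ (⊤ : ℕ∞) (fun y => 𝒟 (K y)))
    (hsym : ∀ y, (𝒟 (K y))ᵀ = 𝒟 (K y)) (x : V2) :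
    divv (Fvec 𝒟 w K) x
      = frob (𝒟 (K x)) (hess w x) - w x * divDiv (fun y => 𝒟 (K y)) x := by
  have hE : ∀ i j, ContDiff ℝ (⊤ : ℕ∞) (fun y => 𝒟 (K y) i j) := fun i j => contDiff_entry hDK i j
  have hEsym : ∀ i j, (fun y => 𝒟 (K y) i j) = (fun y => 𝒟 (K y) j i) := by
    intro i j; funext y
    conv_lhs => rw [← hsym y]
    rw [Matrix.transpose_apply]
  have hEsymx : ∀ i j, 𝒟 (K x) j i = 𝒟 (K x) i j := fun i j => congrFun (hEsym j i) x
  have dw : Differentiable ℝ w := hw.differentiable (by simp)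
  have dpw : ∀ j, Differentiable ℝ (pd j w) := fun j => (contDiff_pd hw j).differentiable (by simp)
  have dE : ∀ i j, Differentiable ℝ (fun y => 𝒟 (K y) i j) :=
    fun i j => (hE i j).differentiable (by simp)
  have dpE : ∀ i j k, Differentiable ℝ (pd k (fun y => 𝒟 (K y) i j)) :=
    fun i j k => (contDiff_pd (hE i j) k).differentiable (by simp)
  have step : ∀ i, pd i (fun y => (∑ j, 𝒟 (K y) j i * pd j w y)
        - w y * ∑ j, pd j (fun z => 𝒟 (K z) j i) y) x
      = ((∑ j, (pd i (fun y => 𝒟 (K y) j i) x * pd j w x + 𝒟 (K x) j i * pd i (pd j w) x))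
        - (pd i w x * (∑ j, pd j (fun z => 𝒟 (K z) j i) x)
            + w x * ∑ j, pd i (pd j (fun z => 𝒟 (K z) j i)) x)) := by
    intro i
    have d1 : DifferentiableAt ℝ (fun y => ∑ j, 𝒟 (K y) j i * pd j w y) x :=
      (Differentiable.fun_sum fun j _ => (dE j i).mul (dpw j)) x
    have d3 : DifferentiableAt ℝ (fun y => ∑ j, pd j (fun z => 𝒟 (K z) j i) y) x :=
      (Differentiable.fun_sum fun j _ => dpE j i j) x
    have d2 : DifferentiableAt ℝ (fun y => w y * ∑ j, pd j (fun z => 𝒟 (K z) j i) y) x :=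
      (dw x).mul d3
    have hs1 : pd i (fun y => ∑ j, pd j (fun z => 𝒟 (K z) j i) y) x
        = ∑ j, pd i (pd j (fun z => 𝒟 (K z) j i)) x :=
      pd_sum Finset.univ _ (fun j _ => dpE j i j x) i
    have hs2 : ∑ j, pd i (fun y => 𝒟 (K y) j i * pd j w y) x
        = ∑ j, (pd i (fun y => 𝒟 (K y) j i) x * pd j w x + 𝒟 (K x) j i * pd i (pd j w) x) :=
      Finset.sum_congr rfl fun j _ => pd_mul (dE j i x) (dpw j x) i
    rw [pd_sub d1 d2 i, pd_sum Finset.univ (fun j y => 𝒟 (K y) j i * pd j w y) (fun j _ => ((dE j i).mul (dpw j)) x) i,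
      pd_mul (dw x) d3 i, hs1, hs2]
  have hcanc : ∑ i, ∑ j, pd i (fun y => 𝒟 (K y) j i) x * pd j w x
      = ∑ i, pd i w x * ∑ j, pd j (fun z => 𝒟 (K z) j i) x := by
    rw [Finset.sum_comm]
    refine Finset.sum_congr rfl fun i _ => ?_
    rw [Finset.mul_sum]
    refine Finset.sum_congr rfl fun j _ => ?_
    rw [hEsym i j]
    ring
  have hfr : ∑ i, ∑ j, 𝒟 (K x) j i * pd i (pd j w) x = frob (𝒟 (K x)) (hess w x) := by
    refine Finset.sum_congr rfl fun i _ => Finset.sum_congr rfl fun j _ => ?_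
    rw [hEsymx i j]
    rfl
  have hdd : ∑ i, ∑ j, pd i (pd j (fun z => 𝒟 (K z) j i)) x = divDiv (fun y => 𝒟 (K y)) x := by
    refine Finset.sum_congr rfl fun i _ => Finset.sum_congr rfl fun j _ => ?_
    rw [hEsym j i]
  calc divv (Fvec 𝒟 w K) x
      = ∑ i, pd i (fun y => (∑ j, 𝒟 (K y) j i * pd j w y)
          - w y * ∑ j, pd j (fun z => 𝒟 (K z) j i) y) x := rfl
    _ = ∑ i, (((∑ j, pd i (fun y => 𝒟 (K y) j i) x * pd j w x)
          + ∑ j, 𝒟 (K x) j i * pd i (pd j w) x)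
        - (pd i w x * (∑ j, pd j (fun z => 𝒟 (K z) j i) x)
            + w x * ∑ j, pd i (pd j (fun z => 𝒟 (K z) j i)) x)) := by
        refine Finset.sum_congr rfl fun i _ => ?_
        rw [step i, Finset.sum_add_distrib]
    _ = frob (𝒟 (K x)) (hess w x) - w x * divDiv (fun y => 𝒟 (K y)) x := by
        rw [Finset.sum_sub_distrib, Finset.sum_add_distrib, Finset.sum_add_distrib, hcanc, hfr,
          ← Finset.mul_sum, hdd]
        ring
  done

end Helpers

/-- joint (time, space) version of `e_w` -/
def euF (α_w : ℝ → V2 → ℝ) (c : ℝ) : ℝ × V2 → ℝ := fun p => α_w p.1 p.2 / c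

/-- joint (time, space) version of the entries of `E_κ` -/
def EuF (𝒟 : M2 →ₗ[ℝ] M2) (A_κ : ℝ → V2 → M2) (i j : Fin 2) : ℝ × V2 → ℝ :=
  fun p => 𝒟 (A_κ p.1 p.2) i j

/-- joint time-derivative of the energy density -/
def GF (𝒟 : M2 →ₗ[ℝ] M2) (α_w : ℝ → V2 → ℝ) (A_κ : ℝ → V2 → M2) (c : ℝ) : ℝ × V2 → ℝ :=
  fun p => 2 * ((∑ i, ∑ j, EuF 𝒟 A_κ i j p * pdx i (pdx j (euF α_w c)) p)
    - euF α_w c p * ∑ i, ∑ j, pdx i (pdx j (EuF 𝒟 A_κ i j)) p)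

lemma frob_tderiv (𝒟 : M2 →ₗ[ℝ] M2) (h𝒟sym : ∀ A B : M2, frob (𝒟 A) B = frob A (𝒟 B))
    {A : ℝ → M2} {D : M2} {t : ℝ} (hA : HasDerivAt A D t) :
    HasDerivAt (fun s => frob (𝒟 (A s)) (A s)) (2 * frob (𝒟 (A t)) D) t := by
  have hDA : HasDerivAt (fun s => 𝒟 (A s)) (𝒟 D) t :=
    ((LinearMap.toContinuousLinearMap 𝒟).hasFDerivAt (x := A t)).comp_hasDerivAt t hA
  have hentry : ∀ i j, HasDerivAt (fun s => A s i j) (D i j) t :=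
    fun i j => hasDerivAt_pi.mp (hasDerivAt_pi.mp hA i) j
  have hDentry : ∀ i j, HasDerivAt (fun s => 𝒟 (A s) i j) (𝒟 D i j) t :=
    fun i j => hasDerivAt_pi.mp (hasDerivAt_pi.mp hDA i) j
  have h : HasDerivAt (fun s => frob (𝒟 (A s)) (A s))
      (∑ i, ∑ j, (𝒟 D i j * A t i j + 𝒟 (A t) i j * D i j)) t := by
    simp only [frob]
    exact HasDerivAt.fun_sum fun i _ => HasDerivAt.fun_sum fun j _ => (hDentry i j).mul (hentry i j)
  convert h using 1
  have h2 : ∑ i, ∑ j, (𝒟 D i j * A t i j + 𝒟 (A t) i j * D i j)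
      = frob (𝒟 D) (A t) + frob (𝒟 (A t)) D := by
    simp only [frob, ← Finset.sum_add_distrib]
  rw [h2, h𝒟sym D (A t), frob_comm]
  ring

/-- energy conservation for the Kirchhoff plate with simply supported
boundary conditions (`e_w = 0`, `nᵀE_κn = 0` and `∂ₛ e_w = 0` on `∂Ω`): the Hamiltonian
`H(t) = ½∫_Ω [α_w²/(ρb) + E_κ : A_κ]` is constant in time. -/
theorem kirchhoff_energy_conservation (Ω : Set V2) (hΩ : IsOpen Ω) (hΩb : IsBounded Ω)
    (σ : Measure V2) (n : V2 → V2)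
    (hdivthm : ∀ F : V2 → V2, ContDiff ℝ (⊤ : ℕ∞) F →
      ∫ x in Ω, divv F x = ∫ x in frontier Ω, F x ⬝ᵥ n x ∂σ)
    (hunit : ∀ x ∈ frontier Ω, n x ⬝ᵥ n x = 1)
    (ρ b : ℝ) (hρ : 0 < ρ) (hb : 0 < b)
    (𝒟 : M2 →ₗ[ℝ] M2)
    (h𝒟sym : ∀ A B : M2, frob (𝒟 A) B = frob A (𝒟 B))
    (h𝒟pos : ∀ A : M2, Aᵀ = A → A ≠ 0 → 0 < frob (𝒟 A) A)
    (h𝒟symmat : ∀ A : M2, Aᵀ = A → (𝒟 A)ᵀ = 𝒟 A)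
    (α_w : ℝ → V2 → ℝ) (A_κ : ℝ → V2 → M2)
    (hsm_w : ContDiff ℝ (⊤ : ℕ∞) (Function.uncurry α_w))
    (hsm_κ : ContDiff ℝ (⊤ : ℕ∞) (Function.uncurry A_κ))
    (hκsym : ∀ t x, (A_κ t x)ᵀ = A_κ t x)
    -- the Kirchhoff system with e_w = α_w/(ρb), E_κ = 𝒟 A_κ and zero forcing :
    (heq_w : ∀ t x, deriv (fun s => α_w s x) t = - divDiv (fun y => 𝒟 (A_κ t y)) x)
    (heq_κ : ∀ t x, deriv (fun s => A_κ s x) t = hess (fun y => α_w t y / (ρ * b)) x)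
    -- boundary conditions (s is the unit tangent, the rotation of n by π/2)
    (hbc_w : ∀ t, ∀ x ∈ frontier Ω, α_w t x / (ρ * b) = 0)
    (hbc_nn : ∀ t, ∀ x ∈ frontier Ω, n x ⬝ᵥ (𝒟 (A_κ t x)).mulVec (n x) = 0)
    (hbc_s : ∀ t, ∀ x ∈ frontier Ω,
      grad (fun y => α_w t y / (ρ * b)) x ⬝ᵥ ![-(n x 1), n x 0] = 0) :
    ∀ t₁ t₂ : ℝ,
      (1 / 2) * ∫ x in Ω, ((α_w t₁ x) ^ 2 / (ρ * b) + frob (𝒟 (A_κ t₁ x)) (A_κ t₁ x)) =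
      (1 / 2) * ∫ x in Ω, ((α_w t₂ x) ^ 2 / (ρ * b) + frob (𝒟 (A_κ t₂ x)) (A_κ t₂ x)) := by
  intro t₁ t₂
  have heu : ContDiff ℝ (⊤ : ℕ∞) (euF α_w (ρ * b)) := hsm_w.div_const _
  have hDA : ContDiff ℝ (⊤ : ℕ∞) (fun p : ℝ × V2 => 𝒟 (A_κ p.1 p.2)) :=
    (LinearMap.toContinuousLinearMap 𝒟).contDiff.comp hsm_κ
  have hEu : ∀ i j, ContDiff ℝ (⊤ : ℕ∞) (EuF 𝒟 A_κ i j) := fun i j => contDiff_entry hDA i j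
  have hGF : ContDiff ℝ (⊤ : ℕ∞) (GF 𝒟 α_w A_κ (ρ * b)) := by
    unfold GF
    exact contDiff_const.mul ((ContDiff.sum fun i _ => ContDiff.sum fun j _ =>
      (hEu i j).mul (contDiff_pdx (contDiff_pdx heu j) i)).sub
      (heu.mul (ContDiff.sum fun i _ => ContDiff.sum fun j _ =>
        contDiff_pdx (contDiff_pdx (hEu i j) j) i)))
  have hwslice : ∀ t, ContDiff ℝ (⊤ : ℕ∞) (fun y => α_w t y / (ρ * b)) :=
    fun t => contDiff_slice heu t
  have hDKslice : ∀ t, ContDiff ℝ (⊤ : ℕ∞) (fun y => 𝒟 (A_κ t y)) :=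
    fun t => hDA.comp (contDiff_const.prodMk contDiff_id)
  have hsymK : ∀ t y, (𝒟 (A_κ t y))ᵀ = 𝒟 (A_κ t y) := fun t y => h𝒟symmat _ (hκsym t y)
  have hhess : ∀ t x i j, hess (fun y => α_w t y / (ρ * b)) x i j
      = pdx i (pdx j (euF α_w (ρ * b))) (t, x) :=
    fun t x i j => hess_slice heu t x i j
  have hdd : ∀ t x, divDiv (fun y => 𝒟 (A_κ t y)) x
      = ∑ i, ∑ j, pdx i (pdx j (EuF 𝒟 A_κ i j)) (t, x) :=
    fun t x => divDiv_slice (g := fun p => 𝒟 (A_κ p.1 p.2)) hEu t x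
  have hfrobconv : ∀ t x, frob (𝒟 (A_κ t x)) (hess (fun y => α_w t y / (ρ * b)) x)
      = ∑ i, ∑ j, EuF 𝒟 A_κ i j (t, x) * pdx i (pdx j (euF α_w (ρ * b))) (t, x) := by
    intro t x
    refine Finset.sum_congr rfl fun i _ => Finset.sum_congr rfl fun j _ => ?_
    rw [hhess t x i j]
    rfl
  -- time derivative of the energy density
  have hTD : ∀ t x, HasDerivAt
      (fun s => (α_w s x) ^ 2 / (ρ * b) + frob (𝒟 (A_κ s x)) (A_κ s x))
      (GF 𝒟 α_w A_κ (ρ * b) (t, x)) t := by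
    intro t x
    have hα : HasDerivAt (fun s => α_w s x) (- divDiv (fun y => 𝒟 (A_κ t y)) x) t := by
      have h : HasDerivAt (fun s => α_w s x) (deriv (fun s => α_w s x) t) t :=
        hasDerivAt_slice_t hsm_w t x
      rwa [heq_w t x] at h
    have hsq : HasDerivAt (fun s => (α_w s x) ^ 2 / (ρ * b))
        ((2 : ℕ) * α_w t x ^ 1 * (- divDiv (fun y => 𝒟 (A_κ t y)) x) / (ρ * b)) t :=
      (hα.pow 2).div_const _
    have hA : HasDerivAt (fun s => A_κ s x) (hess (fun y => α_w t y / (ρ * b)) x) t := by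
      have hd : DifferentiableAt ℝ (fun s => A_κ s x) t :=
        ((hsm_κ.comp (contDiff_id.prodMk contDiff_const)).differentiable (by simp)) t
      have h := hd.hasDerivAt
      exact h.congr_deriv (heq_κ t x)
    have hfr : HasDerivAt (fun s => frob (𝒟 (A_κ s x)) (A_κ s x))
        (2 * frob (𝒟 (A_κ t x)) (hess (fun y => α_w t y / (ρ * b)) x)) t :=
      frob_tderiv 𝒟 h𝒟sym hA
    have hsum := hsq.add hfr
    refine hsum.congr_deriv ?_
    symm
    rw [hfrobconv t x]
    show GF 𝒟 α_w A_κ (ρ * b) (t, x) = _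
    unfold GF
    rw [← hdd t x]
    show 2 * ((∑ i, ∑ j, EuF 𝒟 A_κ i j (t, x) * pdx i (pdx j (euF α_w (ρ * b))) (t, x))
      - α_w t x / (ρ * b) * divDiv (fun y => 𝒟 (A_κ t y)) x) = _
    push_cast
    ring
  -- space identity
  have hSP : ∀ t x, GF 𝒟 α_w A_κ (ρ * b) (t, x)
      = 2 * divv (Fvec 𝒟 (fun y => α_w t y / (ρ * b)) (A_κ t)) x := by
    intro t x
    rw [Fvec_div 𝒟 (hwslice t) (hDKslice t) (hsymK t) x]
    unfold GF
    rw [← hdd t x, hfrobconv t x]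
    show 2 * ((∑ i, ∑ j, EuF 𝒟 A_κ i j (t, x) * pdx i (pdx j (euF α_w (ρ * b))) (t, x))
      - α_w t x / (ρ * b) * divDiv (fun y => 𝒟 (A_κ t y)) x) = _
    ring
  -- boundary vanishing
  have hBD : ∀ t, ∀ x ∈ frontier Ω,
      Fvec 𝒟 (fun y => α_w t y / (ρ * b)) (A_κ t) x ⬝ᵥ n x = 0 :=
    fun t x hx => Fvec_bdry 𝒟 _ _ (n x) x (hunit x hx) (hbc_w t x hx) (hbc_s t x hx)
      (hbc_nn t x hx)
  -- integral of the time derivative vanishes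
  have hint0 : ∀ t, (∫ x in Ω, GF 𝒟 α_w A_κ (ρ * b) (t, x)) = 0 := by
    intro t
    have h1 : (∫ x in Ω, GF 𝒟 α_w A_κ (ρ * b) (t, x))
        = 2 * ∫ x in Ω, divv (Fvec 𝒟 (fun y => α_w t y / (ρ * b)) (A_κ t)) x := by
      rw [← MeasureTheory.integral_const_mul]
      exact integral_congr_ae (Filter.Eventually.of_forall fun x => hSP t x)
    rw [h1, hdivthm _ (Fvec_contDiff 𝒟 (hwslice t) (hDKslice t)),
      setIntegral_eq_zero_of_forall_eq_zero (hBD t), mul_zero]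
  -- compactness / integrability facts
  have hclos : IsCompact (closure Ω) := hΩb.isCompact_closure
  have hμ : volume Ω < ⊤ := hΩb.measure_lt_top
  have hcontf : ∀ t, Continuous
      (fun x => (α_w t x) ^ 2 / (ρ * b) + frob (𝒟 (A_κ t x)) (A_κ t x)) := by
    intro t
    have h1 : ContDiff ℝ (⊤ : ℕ∞) (fun x => (α_w t x) ^ 2 / (ρ * b)) :=
      ((contDiff_slice hsm_w t).pow 2).div_const _
    have h2 : ContDiff ℝ (⊤ : ℕ∞) (fun x => frob (𝒟 (A_κ t x)) (A_κ t x)) := by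
      simp only [frob]
      exact ContDiff.sum fun i _ => ContDiff.sum fun j _ =>
        (contDiff_entry (hDKslice t) i j).mul
          (contDiff_entry (hsm_κ.comp (contDiff_const.prodMk contDiff_id)) i j)
    exact (h1.add h2).continuous
  -- H has zero derivative
  have hH : ∀ t₀, HasDerivAt
      (fun t => ∫ x in Ω, ((α_w t x) ^ 2 / (ρ * b) + frob (𝒟 (A_κ t x)) (A_κ t x))) 0 t₀ := by
    intro t₀
    have hKcp : IsCompact ((Set.Icc (t₀ - 1) (t₀ + 1)) ×ˢ closure Ω) :=
      isCompact_Icc.prod hclos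
    obtain ⟨C, hC⟩ := hKcp.exists_bound_of_continuousOn hGF.continuous.continuousOn
    have key := hasDerivAt_integral_of_dominated_loc_of_deriv_le
      (F := fun t x => (α_w t x) ^ 2 / (ρ * b) + frob (𝒟 (A_κ t x)) (A_κ t x))
      (F' := fun t x => GF 𝒟 α_w A_κ (ρ * b) (t, x))
      (μ := volume.restrict Ω) (x₀ := t₀) (bound := fun _ => C) (s := Metric.ball t₀ 1) (Metric.ball_mem_nhds t₀ one_pos)
      (Filter.Eventually.of_forall fun t => (hcontf t).aestronglyMeasurable)
      ((ContinuousOn.integrableOn_compact hclos (hcontf t₀).continuousOn).mono_set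
        subset_closure)
      ((hGF.continuous.comp (Continuous.prodMk_right t₀)).aestronglyMeasurable)
      ?_ (integrableOn_const hμ.ne) ?_
    · obtain ⟨-, h⟩ := key
      rw [hint0 t₀] at h
      exact h
    · filter_upwards [ae_restrict_mem hΩ.measurableSet] with x hx t ht
      apply hC
      refine ⟨?_, subset_closure hx⟩
      rw [Metric.mem_ball, Real.dist_eq] at ht
      constructor <;> [linarith [abs_lt.mp ht]; linarith [(abs_lt.mp ht).2]]
    · exact Filter.Eventually.of_forall fun x t _ => hTD t x
  have hconst := is_const_of_deriv_eq_zero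
    (f := fun t => ∫ x in Ω, ((α_w t x) ^ 2 / (ρ * b) + frob (𝒟 (A_κ t x)) (A_κ t x)))
    (fun t => (hH t).differentiableAt) (fun t => (hH t).deriv)
  exact congrArg (fun r => 1 / 2 * r) (hconst t₁ t₂)
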